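/- arXiv:1204.3358 — 2 statements merged into one kernel-verified Lean document; each statement's English description precedes it below -/
import Mathlib

section
/- (Optimal back-transform, Lemma 2(a).) Let X be a mean-zero L² random vector in ℝ^p with Cov(X) = Σ, ε mean-zero L² in ℝ^q independent of X with Cov(ε) = V positive definite, Y = Z X + ε, K = Σ Zᵀ (ZΣZᵀ + V)⁻, and let D ∈ ℝ^{p×p} be positive definite. Then A = Z^Σ := Σ Zᵀ (ZΣZᵀ)⁻ minimizes E‖X − A · (Z K Y)‖²_D over A ∈ ℝ^{p×q}. -/
/-!
Write `W = Z K Y`. If `A₀` satisfies the normal equations `Cov(X, W) = A₀ Cov(W, W)`, the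
residual `X - A₀ W` is uncorrelated with `W`, so for every `A` the loss splits as
`E‖X - A W‖²_D = E‖X - A₀ W‖²_D + E‖(A₀ - A) W‖²_D ≥ E‖X - A₀ W‖²_D`.
Since `ZΣZᵀ + V` is positive definite, its generalized inverse is its inverse, and the normal
equations for `A₀ = ΣZᵀ(ZΣZᵀ)⁻` reduce to `ΣZᵀ (ZΣZᵀ)⁻ ZΣZᵀ = ΣZᵀ`. This holds for any
generalized inverse because `Σ ⪰ 0` forces `ker (ZΣZᵀ) ⊆ ker (ΣZᵀ)`.
-/

open Matrix MeasureTheory ProbabilityTheory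
open scoped ComplexOrder

/-- Cross-covariance matrix `E[U Wᵀ]` of two mean-zero random vectors. -/
noncomputable def covMatrix {Ω : Type*} [MeasurableSpace Ω] (μ : Measure Ω)
    {p q : ℕ} (U : Ω → Fin p → ℝ) (W : Ω → Fin q → ℝ) :
    Matrix (Fin p) (Fin q) ℝ :=
  Matrix.of fun i j => ∫ ω, U ω i * W ω j ∂μ

namespace Matrix

variable {𝕜 m n : Type*} [RCLike 𝕜] [Fintype n]

open scoped MatrixOrder Matrix.Norms.L2Operator in
theorem PosSemidef.mul_eq_zero_of_conjTranspose_mul_mul_eq_zero {S : Matrix n n 𝕜}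
    (hS : S.PosSemidef) {N : Matrix n m 𝕜} (h : Nᴴ * S * N = 0) : S * N = 0 := by
  classical
  obtain ⟨B, rfl⟩ := CStarAlgebra.nonneg_iff_eq_star_mul_self.mp hS.nonneg
  have hBN : B * N = 0 := by
    rw [← conjTranspose_mul_self_eq_zero, conjTranspose_mul, ← h]
    simp only [star_eq_conjTranspose, Matrix.mul_assoc]
  rw [star_eq_conjTranspose, Matrix.mul_assoc, hBN, Matrix.mul_zero]

theorem PosSemidef.mul_conjTranspose_mul_ginv [Fintype m] {S : Matrix n n 𝕜} (hS : S.PosSemidef)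
    (Z : Matrix m n 𝕜) {B : Matrix m m 𝕜} (hB : Z * S * Zᴴ * B * (Z * S * Zᴴ) = Z * S * Zᴴ) :
    S * Zᴴ * B * (Z * S * Zᴴ) = S * Zᴴ := by
  classical
  set G := Z * S * Zᴴ
  have hker : (Zᴴ * (1 - B * G))ᴴ * S * (Zᴴ * (1 - B * G)) = 0 := by
    have hGB : G * (1 - B * G) = 0 := by
      rw [Matrix.mul_sub, Matrix.mul_one, ← Matrix.mul_assoc, hB, sub_self]
    calc (Zᴴ * (1 - B * G))ᴴ * S * (Zᴴ * (1 - B * G))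
        = (1 - B * G)ᴴ * (G * (1 - B * G)) := by
          simp only [G, conjTranspose_mul, conjTranspose_conjTranspose, Matrix.mul_assoc]
      _ = 0 := by rw [hGB, Matrix.mul_zero]
  have h := hS.mul_eq_zero_of_conjTranspose_mul_mul_eq_zero hker
  rw [Matrix.mul_sub, Matrix.mul_one, Matrix.mul_sub, sub_eq_zero] at h
  simpa only [Matrix.mul_assoc] using h.symm

theorem eq_nonsing_inv_of_mul_mul_self {R : Type*} [CommRing R] [DecidableEq n]
    {T C : Matrix n n R} (hT : IsUnit T.det) (h : T * C * T = T) : C = T⁻¹ := by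
  refine (inv_eq_left_inv ?_).symm
  calc C * T = T⁻¹ * (T * C * T) := by
        rw [Matrix.mul_assoc T C T, nonsing_inv_mul_cancel_left _ _ hT]
    _ = 1 := by rw [h, nonsing_inv_mul _ hT]

theorem backTransform_normal_eq {p q : Type*} [Fintype p] [Fintype q] [DecidableEq q]
    {S : Matrix p p ℝ} (hS : S.PosSemidef) {V : Matrix q q ℝ} (hV : V.PosDef)
    (Z : Matrix q p ℝ) {B C : Matrix q q ℝ} (hB : Z * S * Zᵀ * B * (Z * S * Zᵀ) = Z * S * Zᵀ)
    (hC : (Z * S * Zᵀ + V) * C * (Z * S * Zᵀ + V) = Z * S * Zᵀ + V) :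
    S * Zᵀ * (Z * (S * Zᵀ * C))ᵀ =
      S * Zᵀ * B * (Z * (S * Zᵀ * C) * ((Z * S * Zᵀ + V) * (Z * (S * Zᵀ * C))ᵀ)) := by
  set G := Z * S * Zᵀ
  set T := G + V
  have hG : G.PosSemidef := by
    simpa only [conjTranspose_eq_transpose_of_trivial] using hS.mul_mul_conjTranspose_same Z
  have hT : T.PosDef := PosDef.posSemidef_add hG hV
  have hTdet : IsUnit T.det := (isUnit_iff_isUnit_det _).mp hT.isUnit
  have hCT : C = T⁻¹ := eq_nonsing_inv_of_mul_mul_self hTdet hC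
  have hM : Z * (S * Zᵀ * C) = G * T⁻¹ := by simp only [G, hCT, Matrix.mul_assoc]
  have hMt : (Z * (S * Zᵀ * C))ᵀ = T⁻¹ * G := by
    rw [hM, transpose_mul, transpose_nonsing_inv, ← conjTranspose_eq_transpose_of_trivial,
      ← conjTranspose_eq_transpose_of_trivial, hT.isHermitian.eq, hG.isHermitian.eq]
  have hKey : S * Zᵀ * B * G = S * Zᵀ := by
    simpa only [conjTranspose_eq_transpose_of_trivial] using
      hS.mul_conjTranspose_mul_ginv Z (B := B)
        (by simpa only [conjTranspose_eq_transpose_of_trivial] using hB)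
  calc S * Zᵀ * (Z * (S * Zᵀ * C))ᵀ = S * Zᵀ * B * G * (T⁻¹ * G) := by rw [hKey, hMt]
    _ = S * Zᵀ * B * (Z * (S * Zᵀ * C) * (T * (Z * (S * Zᵀ * C))ᵀ)) := by
      rw [hMt, hM, Matrix.mul_assoc G, nonsing_inv_mul_cancel_left _ _ hTdet,
        Matrix.mul_assoc (S * Zᵀ * B)]

end Matrix

section covMatrix

variable {Ω : Type*} [MeasurableSpace Ω] {μ : Measure Ω} {p q r : ℕ}
  {U U' : Ω → Fin p → ℝ} {W W' : Ω → Fin q → ℝ}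

theorem memLp_mulVec_apply (hU : ∀ i, MemLp (fun ω => U ω i) 2 μ)
    (A : Matrix (Fin r) (Fin p) ℝ) (k : Fin r) : MemLp (fun ω => (A *ᵥ U ω) k) 2 μ := by
  simpa only [mulVec, dotProduct] using
    memLp_finsetSum Finset.univ fun i _ => (hU i).const_mul (A k i)

theorem integrable_mul_apply (hU : ∀ i, MemLp (fun ω => U ω i) 2 μ)
    (hW : ∀ j, MemLp (fun ω => W ω j) 2 μ) (i : Fin p) (j : Fin q) :
    Integrable (fun ω => U ω i * W ω j) μ :=
  (hU i).integrable_mul (hW j)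

theorem covMatrix_transpose (U : Ω → Fin p → ℝ) (W : Ω → Fin q → ℝ) :
    (covMatrix μ U W)ᵀ = covMatrix μ W U := by
  ext i j
  simp only [covMatrix, transpose_apply, of_apply, mul_comm]

theorem covMatrix_add_left (hU : ∀ i, MemLp (fun ω => U ω i) 2 μ)
    (hU' : ∀ i, MemLp (fun ω => U' ω i) 2 μ) (hW : ∀ j, MemLp (fun ω => W ω j) 2 μ) :
    covMatrix μ (fun ω => U ω + U' ω) W = covMatrix μ U W + covMatrix μ U' W := by
  ext i j
  simp only [covMatrix, of_apply, Matrix.add_apply, Pi.add_apply, add_mul]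
  exact integral_add (integrable_mul_apply hU hW i j) (integrable_mul_apply hU' hW i j)

theorem covMatrix_add_right (hU : ∀ i, MemLp (fun ω => U ω i) 2 μ)
    (hW : ∀ j, MemLp (fun ω => W ω j) 2 μ) (hW' : ∀ j, MemLp (fun ω => W' ω j) 2 μ) :
    covMatrix μ U (fun ω => W ω + W' ω) = covMatrix μ U W + covMatrix μ U W' := by
  rw [← covMatrix_transpose, covMatrix_add_left hW hW' hU, transpose_add, covMatrix_transpose,
    covMatrix_transpose]

theorem covMatrix_sub_left (hU : ∀ i, MemLp (fun ω => U ω i) 2 μ)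
    (hU' : ∀ i, MemLp (fun ω => U' ω i) 2 μ) (hW : ∀ j, MemLp (fun ω => W ω j) 2 μ) :
    covMatrix μ (fun ω => U ω - U' ω) W = covMatrix μ U W - covMatrix μ U' W := by
  ext i j
  simp only [covMatrix, of_apply, Matrix.sub_apply, Pi.sub_apply, sub_mul]
  exact integral_sub (integrable_mul_apply hU hW i j) (integrable_mul_apply hU' hW i j)

theorem covMatrix_mulVec_left (hU : ∀ i, MemLp (fun ω => U ω i) 2 μ)
    (hW : ∀ j, MemLp (fun ω => W ω j) 2 μ) (A : Matrix (Fin r) (Fin p) ℝ) :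
    covMatrix μ (fun ω => A *ᵥ U ω) W = A * covMatrix μ U W := by
  ext k j
  simp only [covMatrix, of_apply, mul_apply, mulVec, dotProduct, Finset.sum_mul, mul_assoc]
  rw [integral_finsetSum _ fun i _ => (integrable_mul_apply hU hW i j).const_mul (A k i)]
  simp only [integral_const_mul]

theorem covMatrix_mulVec_right (hU : ∀ i, MemLp (fun ω => U ω i) 2 μ)
    (hW : ∀ j, MemLp (fun ω => W ω j) 2 μ) (B : Matrix (Fin r) (Fin q) ℝ) :
    covMatrix μ U (fun ω => B *ᵥ W ω) = covMatrix μ U W * Bᵀ := by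
  rw [← covMatrix_transpose, covMatrix_mulVec_left hW hU, transpose_mul, covMatrix_transpose]

theorem covMatrix_eq_zero_of_indepFun (hUW : IndepFun U W μ)
    (hU : ∀ i, MemLp (fun ω => U ω i) 2 μ) (hW : ∀ j, MemLp (fun ω => W ω j) 2 μ)
    (hU₀ : ∀ i, ∫ ω, U ω i ∂μ = 0) : covMatrix μ U W = 0 := by
  ext i j
  have h := (hUW.comp (measurable_pi_apply i) (measurable_pi_apply j)).integral_mul_eq_mul_integral
    (hU i).aestronglyMeasurable (hW j).aestronglyMeasurable
  simp only [covMatrix, of_apply, Matrix.zero_apply]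
  exact h.trans (by simp only [Function.comp_apply, hU₀ i, zero_mul])

theorem integral_dotProduct_mulVec (hU : ∀ i, MemLp (fun ω => U ω i) 2 μ)
    (hW : ∀ j, MemLp (fun ω => W ω j) 2 μ) (N : Matrix (Fin p) (Fin q) ℝ) :
    ∫ ω, U ω ⬝ᵥ N *ᵥ W ω ∂μ = ∑ i, ∑ j, N i j * covMatrix μ U W i j := by
  have hexp : ∀ ω, U ω ⬝ᵥ N *ᵥ W ω = ∑ i, ∑ j, N i j * (U ω i * W ω j) := fun ω => by
    simp only [dotProduct, mulVec, Finset.mul_sum]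
    exact Finset.sum_congr rfl fun i _ => Finset.sum_congr rfl fun j _ => by ring
  have hint : ∀ i j, Integrable (fun ω => N i j * (U ω i * W ω j)) μ := fun i j =>
    (integrable_mul_apply hU hW i j).const_mul (N i j)
  simp only [hexp]
  rw [integral_finsetSum _ fun i _ => integrable_finsetSum _ fun j _ => hint i j]
  refine Finset.sum_congr rfl fun i _ => ?_
  rw [integral_finsetSum _ fun j _ => hint i j]
  simp only [integral_const_mul, covMatrix, of_apply]

theorem covMatrix_mulVec_add_right {X : Ω → Fin p → ℝ} {ε : Ω → Fin q → ℝ}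
    (hX : ∀ i, MemLp (fun ω => X ω i) 2 μ) (hε : ∀ j, MemLp (fun ω => ε ω j) 2 μ)
    (hXε : covMatrix μ X ε = 0) (Z : Matrix (Fin q) (Fin p) ℝ) :
    covMatrix μ X (fun ω => Z *ᵥ X ω + ε ω) = covMatrix μ X X * Zᵀ := by
  rw [covMatrix_add_right hX (memLp_mulVec_apply hX Z) hε, covMatrix_mulVec_right hX hX, hXε,
    add_zero]

theorem covMatrix_mulVec_add_self {X : Ω → Fin p → ℝ} {ε : Ω → Fin q → ℝ}
    (hX : ∀ i, MemLp (fun ω => X ω i) 2 μ) (hε : ∀ j, MemLp (fun ω => ε ω j) 2 μ)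
    (hXε : covMatrix μ X ε = 0) (Z : Matrix (Fin q) (Fin p) ℝ) :
    covMatrix μ (fun ω => Z *ᵥ X ω + ε ω) (fun ω => Z *ᵥ X ω + ε ω) =
      Z * covMatrix μ X X * Zᵀ + covMatrix μ ε ε := by
  have hZX := memLp_mulVec_apply hX Z
  have hY : ∀ j, MemLp (fun ω => (Z *ᵥ X ω + ε ω) j) 2 μ := fun j => (hZX j).add (hε j)
  rw [covMatrix_add_left hZX hε hY, covMatrix_mulVec_left hX hY,
    covMatrix_mulVec_add_right hX hε hXε, covMatrix_add_right hε hZX hε,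
    covMatrix_mulVec_right hε hX, ← covMatrix_transpose X ε, hXε, transpose_zero,
    Matrix.zero_mul, zero_add, Matrix.mul_assoc]

theorem integral_quadForm_residual_le_of_normal_eq {N : Matrix (Fin p) (Fin p) ℝ}
    (hN : N.PosSemidef) (hU : ∀ i, MemLp (fun ω => U ω i) 2 μ)
    (hW : ∀ j, MemLp (fun ω => W ω j) 2 μ) {A₀ : Matrix (Fin p) (Fin q) ℝ}
    (hA₀ : covMatrix μ U W = A₀ * covMatrix μ W W) (A : Matrix (Fin p) (Fin q) ℝ) :
    ∫ ω, (U ω - A₀ *ᵥ W ω) ⬝ᵥ N *ᵥ (U ω - A₀ *ᵥ W ω) ∂μ ≤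
      ∫ ω, (U ω - A *ᵥ W ω) ⬝ᵥ N *ᵥ (U ω - A *ᵥ W ω) ∂μ := by
  set r := fun ω => U ω - A₀ *ᵥ W ω
  set d := fun ω => (A₀ - A) *ᵥ W ω
  have hr : ∀ i, MemLp (fun ω => r ω i) 2 μ := fun i => (hU i).sub (memLp_mulVec_apply hW A₀ i)
  have hd : ∀ i, MemLp (fun ω => d ω i) 2 μ := memLp_mulVec_apply hW (A₀ - A)
  have hs : ∀ i, MemLp (fun ω => (r ω + d ω) i) 2 μ := fun i => (hr i).add (hd i)
  have hrW : covMatrix μ r W = 0 := by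
    rw [covMatrix_sub_left hU (memLp_mulVec_apply hW A₀) hW, covMatrix_mulVec_left hW hW, hA₀,
      sub_self]
  have hrd : covMatrix μ r d = 0 := by rw [covMatrix_mulVec_right hr hW, hrW, Matrix.zero_mul]
  have hdr : covMatrix μ d r = 0 := by rw [← covMatrix_transpose, hrd, transpose_zero]
  have hcov : covMatrix μ (fun ω => r ω + d ω) (fun ω => r ω + d ω) =
      covMatrix μ r r + covMatrix μ d d := by
    rw [covMatrix_add_left hr hd hs, covMatrix_add_right hr hr hd,
      covMatrix_add_right hd hr hd, hrd, hdr, add_zero, zero_add]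
  have hsplit : ∀ ω, U ω - A *ᵥ W ω = r ω + d ω := fun ω => by
    simp only [r, d, sub_mulVec]
    abel
  have hdd : 0 ≤ ∫ ω, d ω ⬝ᵥ N *ᵥ d ω ∂μ :=
    integral_nonneg fun ω => by simpa using hN.dotProduct_mulVec_nonneg (d ω)
  calc ∫ ω, r ω ⬝ᵥ N *ᵥ r ω ∂μ
      ≤ ∫ ω, r ω ⬝ᵥ N *ᵥ r ω ∂μ + ∫ ω, d ω ⬝ᵥ N *ᵥ d ω ∂μ := le_add_of_nonneg_right hdd
    _ = ∫ ω, (r ω + d ω) ⬝ᵥ N *ᵥ (r ω + d ω) ∂μ := by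
      simp only [integral_dotProduct_mulVec hr hr, integral_dotProduct_mulVec hd hd,
        integral_dotProduct_mulVec hs hs, hcov, Matrix.add_apply, mul_add, Finset.sum_add_distrib]
    _ = ∫ ω, (U ω - A *ᵥ W ω) ⬝ᵥ N *ᵥ (U ω - A *ᵥ W ω) ∂μ := by simp only [hsplit]

end covMatrix

theorem optimal_back_transform_general {Ω : Type*} [MeasurableSpace Ω]
    (μ : Measure Ω) {p q : ℕ}
    (X : Ω → Fin p → ℝ) (ε : Ω → Fin q → ℝ)
    (Z : Matrix (Fin q) (Fin p) ℝ)
    (S : Matrix (Fin p) (Fin p) ℝ) (hS : S.PosSemidef)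
    (V : Matrix (Fin q) (Fin q) ℝ) (hV : V.PosDef)
    (hXL2 : ∀ i, MemLp (fun ω => X ω i) 2 μ)
    (hεL2 : ∀ j, MemLp (fun ω => ε ω j) 2 μ)
    (hXmean : ∀ i, ∫ ω, X ω i ∂μ = 0)
    (hindep : IndepFun X ε μ)
    (hCovX : covMatrix μ X X = S)
    (hCovε : covMatrix μ ε ε = V)
    (Y : Ω → Fin q → ℝ) (hY : ∀ ω, Y ω = Z.mulVec (X ω) + ε ω)
    (D : Matrix (Fin p) (Fin p) ℝ) (hD : D.PosDef)
    (Bm : Matrix (Fin q) (Fin q) ℝ)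
    (hB2 : (Z * S * Zᵀ) * Bm * (Z * S * Zᵀ) = Z * S * Zᵀ)
    (Cm : Matrix (Fin q) (Fin q) ℝ)
    (hC2 : (Z * S * Zᵀ + V) * Cm * (Z * S * Zᵀ + V) = Z * S * Zᵀ + V) :
    ∀ A : Matrix (Fin p) (Fin q) ℝ,
      (∫ ω, (X ω - (S * Zᵀ * Bm).mulVec ((Z * (S * Zᵀ * Cm)).mulVec (Y ω))) ⬝ᵥ
          D⁻¹.mulVec
            (X ω - (S * Zᵀ * Bm).mulVec ((Z * (S * Zᵀ * Cm)).mulVec (Y ω))) ∂μ) ≤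
      ∫ ω, (X ω - A.mulVec ((Z * (S * Zᵀ * Cm)).mulVec (Y ω))) ⬝ᵥ
          D⁻¹.mulVec
            (X ω - A.mulVec ((Z * (S * Zᵀ * Cm)).mulVec (Y ω))) ∂μ := by
  intro A
  obtain rfl : Y = fun ω => Z *ᵥ X ω + ε ω := funext hY
  have hY : ∀ j, MemLp (fun ω => (Z *ᵥ X ω + ε ω) j) 2 μ := fun j =>
    (memLp_mulVec_apply hXL2 Z j).add (hεL2 j)
  have hXε : covMatrix μ X ε = 0 := covMatrix_eq_zero_of_indepFun hindep hXL2 hεL2 hXmean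
  refine integral_quadForm_residual_le_of_normal_eq hD.inv.posSemidef hXL2
    (memLp_mulVec_apply hY _) ?_ A
  rw [covMatrix_mulVec_right hXL2 hY, covMatrix_mulVec_left hY (memLp_mulVec_apply hY _),
    covMatrix_mulVec_right hY hY, covMatrix_mulVec_add_right hXL2 hεL2 hXε,
    covMatrix_mulVec_add_self hXL2 hεL2 hXε, hCovX, hCovε]
  exact backTransform_normal_eq hS hV Z hB2 hC2

/-- Lemma 2(a), optimal back-transform: `A = Z^Σ = Σ Zᵀ (ZΣZᵀ)⁻`
minimizes `E‖X − A (Z K Y)‖²_D` over all `A`, where `K = ΣZᵀ(ZΣZᵀ+V)⁻`,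
`D` positive definite and `‖x‖²_D = xᵀ D⁻¹ x`. -/
theorem optimal_back_transform {Ω : Type*} [MeasurableSpace Ω]
    (μ : Measure Ω) [IsProbabilityMeasure μ] {p q : ℕ}
    (X : Ω → Fin p → ℝ) (ε : Ω → Fin q → ℝ)
    (Z : Matrix (Fin q) (Fin p) ℝ)
    (S : Matrix (Fin p) (Fin p) ℝ) (hS : S.PosSemidef)
    (V : Matrix (Fin q) (Fin q) ℝ) (hV : V.PosDef)
    (hXmeas : Measurable X) (hεmeas : Measurable ε)
    (hXL2 : ∀ i, MemLp (fun ω => X ω i) 2 μ)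
    (hεL2 : ∀ j, MemLp (fun ω => ε ω j) 2 μ)
    (hXmean : ∀ i, ∫ ω, X ω i ∂μ = 0)
    (hεmean : ∀ j, ∫ ω, ε ω j ∂μ = 0)
    (hindep : IndepFun X ε μ)
    (hCovX : covMatrix μ X X = S)
    (hCovε : covMatrix μ ε ε = V)
    (Y : Ω → Fin q → ℝ) (hY : ∀ ω, Y ω = Z.mulVec (X ω) + ε ω)
    (D : Matrix (Fin p) (Fin p) ℝ) (hD : D.PosDef)
    (Bm : Matrix (Fin q) (Fin q) ℝ)
    (hB1 : Bm * (Z * S * Zᵀ) * Bm = Bm)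
    (hB2 : (Z * S * Zᵀ) * Bm * (Z * S * Zᵀ) = Z * S * Zᵀ)
    (hB3 : (Bm * (Z * S * Zᵀ))ᵀ = Bm * (Z * S * Zᵀ))
    (hB4 : ((Z * S * Zᵀ) * Bm)ᵀ = (Z * S * Zᵀ) * Bm)
    (Cm : Matrix (Fin q) (Fin q) ℝ)
    (hC1 : Cm * (Z * S * Zᵀ + V) * Cm = Cm)
    (hC2 : (Z * S * Zᵀ + V) * Cm * (Z * S * Zᵀ + V) = Z * S * Zᵀ + V)
    (hC3 : (Cm * (Z * S * Zᵀ + V))ᵀ = Cm * (Z * S * Zᵀ + V))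
    (hC4 : ((Z * S * Zᵀ + V) * Cm)ᵀ = (Z * S * Zᵀ + V) * Cm) :
    ∀ A : Matrix (Fin p) (Fin q) ℝ,
      (∫ ω, (X ω - (S * Zᵀ * Bm).mulVec ((Z * (S * Zᵀ * Cm)).mulVec (Y ω))) ⬝ᵥ
          D⁻¹.mulVec
            (X ω - (S * Zᵀ * Bm).mulVec ((Z * (S * Zᵀ * Cm)).mulVec (Y ω))) ∂μ) ≤
      ∫ ω, (X ω - A.mulVec ((Z * (S * Zᵀ * Cm)).mulVec (Y ω))) ⬝ᵥ
          D⁻¹.mulVec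
            (X ω - A.mulVec ((Z * (S * Zᵀ * Cm)).mulVec (Y ω))) ∂μ :=
  optimal_back_transform_general μ X ε Z S hS V hV hXL2 hεL2 hXmean hindep hCovX hCovε Y hY D hD Bm
    hB2 Cm hC2
end

section
/- (Bounded risk of rLS.IO under IO contamination, Proposition A.6.) Let Σ ⪰ 0, Z ∈ ℝ^{q×p}, V = Cov(ε) with ε a mean-zero L² random vector in ℝ^q, C = ZΣZᵀ + V, K = ΣZᵀC⁻, Z^Σ = ΣZᵀ(ZΣZᵀ)⁻, b > 0, and H_b(y) = y·min{1, b/|y|} the Huber clipping function. Define the semi-norm matrix D⁻ = (Z^Σ Z)ᵀ Σ⁻ (Z^Σ Z) with B = ZΣZᵀ. Then for ANY random vector X in ℝ^p (arbitrarily contaminated), the reconstruction error e = X − Z^Σ(Y − H_b(Y − ZKY)) with Y = ZX + ε satisfies eᵀ D⁻ e ≤ 2 εᵀ B⁻ ε + 2 H_b((I_q−ZK)Y)ᵀ B⁻ H_b((I_q−ZK)Y), and hence E[eᵀD⁻e] ≤ 2 tr(B⁻(V + b² I_q)). -/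
/-!
Since `B⁻ (ZΣZᵀ) B⁻ = B⁻`, the matrix `P = Z^Σ Z` is idempotent with `P Z^Σ = Z^Σ`, so
`P e = Z^Σ (H − ε)` with `H = H_b((I − ZK)Y)`: the state `X` cancels. As `(Z^Σ)ᵀ Σ⁻ Z^Σ = B⁻`,
this gives `eᵀ D⁻ e = (H − ε)ᵀ B⁻ (H − ε)`, and the pointwise bound is
`(u − v)ᵀ M (u − v) ≤ 2 uᵀMu + 2 vᵀMv` for the positive semidefinite `M = B⁻`. Taking
expectations, `E[εᵀ B⁻ ε] = tr(B⁻ V)`, while `|H| ≤ b` bounds `Hᵀ B⁻ H ≤ b² tr B⁻` uniformly.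
-/

open Matrix MeasureTheory

/-- Huber clipping function on `ℝ^q` (Euclidean norm): `H_b(y) = y · min{1, b/|y|}`. -/
noncomputable def huber {q : ℕ} (b : ℝ) (y : Fin q → ℝ) : Fin q → ℝ :=
  (min 1 (b / Real.sqrt (y ⬝ᵥ y))) • y

namespace Matrix

section Penrose

variable {R : Type*} [CommSemiring R] {m n : Type*} [Fintype m] [Fintype n]

structure IsPenroseInverse (A : Matrix m n R) (X : Matrix n m R) : Prop where
  mul_mul_self : A * X * A = A
  self_mul_mul : X * A * X = X
  transpose_mul_right : (A * X)ᵀ = A * X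
  transpose_mul_left : (X * A)ᵀ = X * A

variable {A : Matrix m n R} {X Y : Matrix n m R}

theorem IsPenroseInverse.unique (hX : IsPenroseInverse A X) (hY : IsPenroseInverse A Y) :
    X = Y := by
  have hX_eq : X = X * A * Y := calc
    X = X * (A * X)ᵀ := by rw [hX.transpose_mul_right, ← Matrix.mul_assoc, hX.self_mul_mul]
    _ = X * (A * Y * (A * X))ᵀ := by rw [← Matrix.mul_assoc, hY.mul_mul_self]
    _ = X * A * X * A * Y := by
      rw [transpose_mul, hX.transpose_mul_right, hY.transpose_mul_right]
      simp only [Matrix.mul_assoc]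
    _ = X * A * Y := by rw [hX.self_mul_mul]
  have hY_eq : Y = X * A * Y := calc
    Y = (Y * A)ᵀ * Y := by rw [hY.transpose_mul_left, hY.self_mul_mul]
    _ = (Y * A * X * A)ᵀ * Y := by
      rw [Matrix.mul_assoc Y A X, Matrix.mul_assoc, hX.mul_mul_self]
    _ = X * A * (Y * A * Y) := by
      rw [Matrix.mul_assoc (Y * A), transpose_mul, hX.transpose_mul_left, hY.transpose_mul_left]
      simp only [Matrix.mul_assoc]
    _ = X * A * Y := by rw [hY.self_mul_mul]
  rw [hX_eq, ← hY_eq]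

theorem IsPenroseInverse.transpose (hX : IsPenroseInverse A X) : IsPenroseInverse Aᵀ Xᵀ where
  mul_mul_self := by
    simpa only [transpose_mul, Matrix.mul_assoc] using congrArg (·ᵀ) hX.mul_mul_self
  self_mul_mul := by
    simpa only [transpose_mul, Matrix.mul_assoc] using congrArg (·ᵀ) hX.self_mul_mul
  transpose_mul_right := by
    rw [← transpose_mul, hX.transpose_mul_left, hX.transpose_mul_left]
  transpose_mul_left := by
    rw [← transpose_mul, hX.transpose_mul_right, hX.transpose_mul_right]

theorem IsPenroseInverse.transpose_eq_self {A X : Matrix n n R} (hA : Aᵀ = A)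
    (hX : IsPenroseInverse A X) : Xᵀ = X :=
  (hA ▸ hX.transpose).unique hX

theorem IsPenroseInverse.posSemidef {R : Type*} [CommRing R] [PartialOrder R] [StarRing R]
    [TrivialStar R] {A X : Matrix n n R} (hA : A.PosSemidef) (hX : IsPenroseInverse A X) :
    X.PosSemidef := by
  have hXt : Xᴴ = X := by
    rw [conjTranspose_eq_transpose_of_trivial,
      hX.transpose_eq_self (isHermitian_iff_isSymm.mp hA.1)]
  simpa only [hXt, hX.self_mul_mul] using hA.conjTranspose_mul_mul_same X

end Penrose

section QuadraticForm

variable {m n : Type*} [Fintype m] [Fintype n]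

theorem dotProduct_transpose_mul_mul_mulVec {R : Type*} [CommSemiring R]
    (A : Matrix m n R) (M : Matrix m m R) (v : n → R) :
    v ⬝ᵥ (Aᵀ * M * A) *ᵥ v = (A *ᵥ v) ⬝ᵥ M *ᵥ (A *ᵥ v) := by
  rw [dotProduct_mulVec, dotProduct_mulVec, vecMul_mulVec, dotProduct_mulVec, vecMul_vecMul]

theorem dotProduct_mulVec_eq_sum_sum {R : Type*} [CommSemiring R] (M : Matrix n n R)
    (v : n → R) : v ⬝ᵥ M *ᵥ v = ∑ i, ∑ j, M i j * (v i * v j) := by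
  simp only [dotProduct, mulVec, Finset.mul_sum]
  exact Finset.sum_congr rfl fun i _ => Finset.sum_congr rfl fun j _ => by ring

variable {M : Matrix n n ℝ}

theorem PosSemidef.dotProduct_mulVec_sub_le (hM : M.PosSemidef) (u v : n → ℝ) :
    (u - v) ⬝ᵥ M *ᵥ (u - v) ≤ 2 * (u ⬝ᵥ M *ᵥ u) + 2 * (v ⬝ᵥ M *ᵥ v) := by
  have parallelogram : (u - v) ⬝ᵥ M *ᵥ (u - v) + (u + v) ⬝ᵥ M *ᵥ (u + v)
      = 2 * (u ⬝ᵥ M *ᵥ u) + 2 * (v ⬝ᵥ M *ᵥ v) := by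
    simp only [mulVec_sub, mulVec_add, sub_dotProduct, add_dotProduct, dotProduct_sub,
      dotProduct_add]
    ring
  have := hM.dotProduct_mulVec_nonneg (u + v)
  rw [star_trivial] at this
  linarith

theorem PosSemidef.dotProduct_mulVec_le_trace_mul (hM : M.PosSemidef) (v : n → ℝ) :
    v ⬝ᵥ M *ᵥ v ≤ M.trace * (v ⬝ᵥ v) := by
  obtain ⟨k, w, rfl⟩ := posSemidef_iff_eq_sum_vecMulVec.mp hM
  simp only [star_trivial, sum_mulVec, vecMulVec_mulVec, dotProduct_sum, trace_sum,
    trace_vecMulVec, Finset.sum_mul]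
  refine Finset.sum_le_sum fun i _ => ?_
  rw [op_smul_eq_smul, dotProduct_smul, smul_eq_mul, dotProduct_comm v, ← pow_two]
  simpa only [dotProduct, pow_two] using Finset.sum_mul_sq_le_sq_mul_sq Finset.univ (w i) v

end QuadraticForm

section Reconstruction

variable {m n : Type*} [Fintype m] [Fintype n]

theorem mul_mulVec_sub_mulVec_of_mul_mul_self {R : Type*} [CommRing R]
    {G : Matrix n m R} {Z : Matrix m n R} (hG : G * Z * G = G) (x : n → R) (ε h : m → R) :
    (G * Z) *ᵥ (x - G *ᵥ (Z *ᵥ x + ε - h)) = G *ᵥ (h - ε) := by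
  have hGZ : G * Z * (G * Z) = G * Z := by rw [← Matrix.mul_assoc, hG]
  simp only [mulVec_sub, mulVec_add, mulVec_mulVec, hG, hGZ]
  abel

theorem IsPenroseInverse.posSemidef_of_sandwich {S : Matrix n n ℝ} {Z : Matrix m n ℝ}
    {B : Matrix m m ℝ} (hS : S.PosSemidef) (hB : IsPenroseInverse (Z * S * Zᵀ) B) :
    B.PosSemidef :=
  hB.posSemidef (conjTranspose_eq_transpose_of_trivial Z ▸ hS.mul_mul_conjTranspose_same Z)

-- `S * Zᵀ * B` is the paper's `Z^Σ = ΣZᵀ(ZΣZᵀ)⁻`, with `B` the Moore–Penrose inverse of `ZΣZᵀ`.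
variable {R : Type*} [CommRing R] {S Sm : Matrix n n R} {Z : Matrix m n R} {B : Matrix m m R}

theorem IsPenroseInverse.mul_mul_self_of_sandwich (hB : IsPenroseInverse (Z * S * Zᵀ) B) :
    S * Zᵀ * B * Z * (S * Zᵀ * B) = S * Zᵀ * B := by
  simpa only [Matrix.mul_assoc] using congrArg (S * Zᵀ * ·) hB.self_mul_mul

theorem IsPenroseInverse.transpose_mul_mul_of_sandwich (hS : Sᵀ = S) (hSm : S * Sm * S = S)
    (hB : IsPenroseInverse (Z * S * Zᵀ) B) :
    (S * Zᵀ * B)ᵀ * Sm * (S * Zᵀ * B) = B := by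
  have hBt : Bᵀ = B := hB.transpose_eq_self (by simp [transpose_mul, hS, Matrix.mul_assoc])
  calc (S * Zᵀ * B)ᵀ * Sm * (S * Zᵀ * B) = B * (Z * (S * Sm * S) * Zᵀ) * B := by
        simp only [transpose_mul, transpose_transpose, hS, hBt, Matrix.mul_assoc]
    _ = B := by rw [hSm, hB.self_mul_mul]

theorem IsPenroseInverse.dotProduct_mulVec_reconstruction_error (hS : Sᵀ = S)
    (hSm : S * Sm * S = S) (hB : IsPenroseInverse (Z * S * Zᵀ) B) (x : n → R) (ε h : m → R) :
    (x - (S * Zᵀ * B) *ᵥ (Z *ᵥ x + ε - h)) ⬝ᵥ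
        ((S * Zᵀ * B * Z)ᵀ * Sm * (S * Zᵀ * B * Z)) *ᵥ (x - (S * Zᵀ * B) *ᵥ (Z *ᵥ x + ε - h)) =
      (h - ε) ⬝ᵥ B *ᵥ (h - ε) := by
  rw [dotProduct_transpose_mul_mul_mulVec,
    mul_mulVec_sub_mulVec_of_mul_mul_self hB.mul_mul_self_of_sandwich,
    ← dotProduct_transpose_mul_mul_mulVec, hB.transpose_mul_mul_of_sandwich hS hSm]

end Reconstruction

end Matrix

theorem huber_dotProduct_self_le {q : ℕ} (b : ℝ) (y : Fin q → ℝ) :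
    huber b y ⬝ᵥ huber b y ≤ b ^ 2 := by
  have hnorm : huber b y ⬝ᵥ huber b y = (min 1 (b / √(y ⬝ᵥ y)) * √(y ⬝ᵥ y)) ^ 2 := by
    rw [mul_pow, Real.sq_sqrt (by simpa using dotProduct_self_star_nonneg y)]
    simp only [huber, smul_dotProduct, dotProduct_smul, smul_eq_mul]
    ring
  rw [hnorm]
  have hs := Real.sqrt_nonneg (y ⬝ᵥ y)
  generalize √(y ⬝ᵥ y) = s at hs ⊢
  rcases hs.eq_or_lt with rfl | hspos
  · simpa using sq_nonneg b
  rcases min_cases 1 (b / s) with ⟨hc, hsb⟩ | ⟨hc, -⟩ <;> rw [hc]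
  · rw [one_mul]
    exact pow_le_pow_left₀ hspos.le ((one_le_div₀ hspos).mp hsb) 2
  · rw [div_mul_cancel₀ b hspos.ne']

theorem Matrix.PosSemidef.huber_dotProduct_mulVec_huber_le {q : ℕ}
    {M : Matrix (Fin q) (Fin q) ℝ} (hM : M.PosSemidef) (b : ℝ) (y : Fin q → ℝ) :
    huber b y ⬝ᵥ M *ᵥ huber b y ≤ b ^ 2 * M.trace :=
  (hM.dotProduct_mulVec_le_trace_mul _).trans <| by
    rw [mul_comm]
    exact mul_le_mul_of_nonneg_right (huber_dotProduct_self_le b y) hM.trace_nonneg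

section SecondMoment

variable {Ω ι : Type*} [MeasurableSpace Ω] {μ : Measure Ω} [Fintype ι] {ε : Ω → ι → ℝ}

theorem integrable_dotProduct_mulVec (hε : ∀ i, MemLp (fun ω => ε ω i) 2 μ)
    (M : Matrix ι ι ℝ) : Integrable (fun ω => ε ω ⬝ᵥ M *ᵥ ε ω) μ := by
  simp only [dotProduct_mulVec_eq_sum_sum]
  exact integrable_finsetSum _ fun i _ => integrable_finsetSum _ fun j _ =>
    ((hε i).integrable_mul (hε j)).const_mul _

theorem integral_dotProduct_mulVec_s13 (hε : ∀ i, MemLp (fun ω => ε ω i) 2 μ)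
    (M : Matrix ι ι ℝ) :
    ∫ ω, ε ω ⬝ᵥ M *ᵥ ε ω ∂μ = (M * of fun i j => ∫ ω, ε ω i * ε ω j ∂μ).trace := by
  have hint (i j : ι) : Integrable (fun ω => M i j * (ε ω i * ε ω j)) μ :=
    ((hε i).integrable_mul (hε j)).const_mul _
  simp only [dotProduct_mulVec_eq_sum_sum]
  rw [integral_finsetSum _ fun i _ => integrable_finsetSum _ fun j _ => hint i j]
  simp only [trace, diag, mul_apply, of_apply]
  refine Finset.sum_congr rfl fun i _ => ?_
  rw [integral_finsetSum _ fun j _ => hint i j]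
  refine Finset.sum_congr rfl fun j _ => ?_
  simp only [integral_const_mul, mul_comm (ε _ i)]

theorem integral_sub_dotProduct_mulVec_sub_le [IsProbabilityMeasure μ] {M : Matrix ι ι ℝ}
    (hM : M.PosSemidef) (hε : ∀ i, MemLp (fun ω => ε ω i) 2 μ) {H : Ω → ι → ℝ} {c : ℝ}
    (hH : ∀ ω, H ω ⬝ᵥ M *ᵥ H ω ≤ c) :
    ∫ ω, (H ω - ε ω) ⬝ᵥ M *ᵥ (H ω - ε ω) ∂μ ≤
      2 * (M * of fun i j => ∫ ω, ε ω i * ε ω j ∂μ).trace + 2 * c := calc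
  _ ≤ ∫ ω, 2 * (ε ω ⬝ᵥ M *ᵥ ε ω) + 2 * c ∂μ := by
      refine integral_mono_of_nonneg (ae_of_all _ fun ω => ?_)
        (((integrable_dotProduct_mulVec hε M).const_mul 2).add (integrable_const _))
        (ae_of_all _ fun ω => ?_)
      · simpa only [star_trivial, Pi.zero_apply] using hM.dotProduct_mulVec_nonneg (H ω - ε ω)
      · linarith [hM.dotProduct_mulVec_sub_le (H ω) (ε ω), hH ω]
  _ = _ := by
      rw [integral_add ((integrable_dotProduct_mulVec hε M).const_mul 2) (integrable_const _),
        integral_const_mul, integral_dotProduct_mulVec_s13 hε]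
      simp

end SecondMoment

theorem rLSIO_bounded_risk_general {Ω : Type*} [MeasurableSpace Ω]
    (μ : Measure Ω) [IsProbabilityMeasure μ] {p q : ℕ}
    (X : Ω → Fin p → ℝ) (ε : Ω → Fin q → ℝ)
    (Z : Matrix (Fin q) (Fin p) ℝ)
    (S : Matrix (Fin p) (Fin p) ℝ) (hS : S.PosSemidef)
    (V : Matrix (Fin q) (Fin q) ℝ)
    (hεL2 : ∀ j, MemLp (fun ω => ε ω j) 2 μ)
    (hCovε : Matrix.of (fun i j => ∫ ω, ε ω i * ε ω j ∂μ) = V)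
    (b : ℝ)
    (Sm : Matrix (Fin p) (Fin p) ℝ)
    (hS2 : S * Sm * S = S)
    (Bm : Matrix (Fin q) (Fin q) ℝ)
    (hB1 : Bm * (Z * S * Zᵀ) * Bm = Bm)
    (hB2 : (Z * S * Zᵀ) * Bm * (Z * S * Zᵀ) = Z * S * Zᵀ)
    (hB3 : (Bm * (Z * S * Zᵀ))ᵀ = Bm * (Z * S * Zᵀ))
    (hB4 : ((Z * S * Zᵀ) * Bm)ᵀ = (Z * S * Zᵀ) * Bm)
    (Y : Ω → Fin q → ℝ) (hY : ∀ ω, Y ω = Z.mulVec (X ω) + ε ω)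
    (K : Matrix (Fin p) (Fin q) ℝ)
    (ZS : Matrix (Fin p) (Fin q) ℝ) (hZS : ZS = S * Zᵀ * Bm)
    (Dm : Matrix (Fin p) (Fin p) ℝ) (hDm : Dm = (ZS * Z)ᵀ * Sm * (ZS * Z))
    (e : Ω → Fin p → ℝ)
    (he : ∀ ω, e ω = X ω - ZS.mulVec (Y ω - huber b (Y ω - (Z * K).mulVec (Y ω)))) :
    (∀ ω, e ω ⬝ᵥ Dm.mulVec (e ω) ≤
        2 * (ε ω ⬝ᵥ Bm.mulVec (ε ω)) +
        2 * (huber b (Y ω - (Z * K).mulVec (Y ω)) ⬝ᵥ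
              Bm.mulVec (huber b (Y ω - (Z * K).mulVec (Y ω))))) ∧
    (∫ ω, e ω ⬝ᵥ Dm.mulVec (e ω) ∂μ) ≤
        2 * Matrix.trace (Bm * (V + b ^ 2 • (1 : Matrix (Fin q) (Fin q) ℝ))) := by
  subst hZS hDm
  have hBm : IsPenroseInverse (Z * S * Zᵀ) Bm := ⟨hB2, hB1, hB4, hB3⟩
  have hBm_psd : Bm.PosSemidef := hBm.posSemidef_of_sandwich hS
  set H := fun ω => huber b (Y ω - (Z * K) *ᵥ Y ω)
  have hquad (ω : Ω) : e ω ⬝ᵥ ((S * Zᵀ * Bm * Z)ᵀ * Sm * (S * Zᵀ * Bm * Z)) *ᵥ e ω =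
      (H ω - ε ω) ⬝ᵥ Bm *ᵥ (H ω - ε ω) := by
    have he' : e ω = X ω - (S * Zᵀ * Bm) *ᵥ (Z *ᵥ X ω + ε ω - H ω) := by
      rw [he ω, ← hY ω]
    rw [he']
    exact hBm.dotProduct_mulVec_reconstruction_error (isHermitian_iff_isSymm.mp hS.1) hS2 _ _ _
  refine ⟨fun ω => (hquad ω).trans_le ?_, ?_⟩
  · linarith [hBm_psd.dotProduct_mulVec_sub_le (H ω) (ε ω)]
  calc ∫ ω, e ω ⬝ᵥ ((S * Zᵀ * Bm * Z)ᵀ * Sm * (S * Zᵀ * Bm * Z)) *ᵥ e ω ∂μ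
      = ∫ ω, (H ω - ε ω) ⬝ᵥ Bm *ᵥ (H ω - ε ω) ∂μ :=
        integral_congr_ae (ae_of_all _ hquad)
    _ ≤ 2 * (Bm * V).trace + 2 * (b ^ 2 * Bm.trace) :=
      hCovε ▸ integral_sub_dotProduct_mulVec_sub_le hBm_psd hεL2
        fun ω => hBm_psd.huber_dotProduct_mulVec_huber_le b _
    _ = 2 * (Bm * (V + b ^ 2 • (1 : Matrix (Fin q) (Fin q) ℝ))).trace := by
      rw [Matrix.mul_add, trace_add, Matrix.mul_smul, Matrix.mul_one, trace_smul, smul_eq_mul]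
      ring

/-- Proposition A.6, bounded risk of rLS.IO under IO contamination:
for ANY (arbitrarily contaminated) state `X`, ideally distributed errors `ε` with
covariance `V`, the reconstruction error `e = X − Z^Σ(Y − H_b(Y − ZKY))` of the
rLS.IO satisfies the pointwise bound
`eᵀ D⁻ e ≤ 2 εᵀ B⁻ ε + 2 H_b(...)ᵀ B⁻ H_b(...)` in the seminorm
`D⁻ = (Z^Σ Z)ᵀ Σ⁻ (Z^Σ Z)`, whence `E[eᵀ D⁻ e] ≤ 2 tr(B⁻(V + b² I))`. -/
theorem rLSIO_bounded_risk {Ω : Type*} [MeasurableSpace Ω]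
    (μ : Measure Ω) [IsProbabilityMeasure μ] {p q : ℕ}
    (X : Ω → Fin p → ℝ) (ε : Ω → Fin q → ℝ)
    (Z : Matrix (Fin q) (Fin p) ℝ)
    (S : Matrix (Fin p) (Fin p) ℝ) (hS : S.PosSemidef)
    (V : Matrix (Fin q) (Fin q) ℝ) (hV : V.PosSemidef)
    (hXmeas : Measurable X) (hεmeas : Measurable ε)
    (hεL2 : ∀ j, MemLp (fun ω => ε ω j) 2 μ)
    (hεmean : ∀ j, ∫ ω, ε ω j ∂μ = 0)
    (hCovε : Matrix.of (fun i j => ∫ ω, ε ω i * ε ω j ∂μ) = V)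
    (b : ℝ) (hb : 0 < b)
    (Sm : Matrix (Fin p) (Fin p) ℝ)
    (hS1 : Sm * S * Sm = Sm) (hS2 : S * Sm * S = S)
    (hS3 : (Sm * S)ᵀ = Sm * S) (hS4 : (S * Sm)ᵀ = S * Sm)
    (Bm : Matrix (Fin q) (Fin q) ℝ)
    (hB1 : Bm * (Z * S * Zᵀ) * Bm = Bm)
    (hB2 : (Z * S * Zᵀ) * Bm * (Z * S * Zᵀ) = Z * S * Zᵀ)
    (hB3 : (Bm * (Z * S * Zᵀ))ᵀ = Bm * (Z * S * Zᵀ))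
    (hB4 : ((Z * S * Zᵀ) * Bm)ᵀ = (Z * S * Zᵀ) * Bm)
    (Cm : Matrix (Fin q) (Fin q) ℝ)
    (hC1 : Cm * (Z * S * Zᵀ + V) * Cm = Cm)
    (hC2 : (Z * S * Zᵀ + V) * Cm * (Z * S * Zᵀ + V) = Z * S * Zᵀ + V)
    (hC3 : (Cm * (Z * S * Zᵀ + V))ᵀ = Cm * (Z * S * Zᵀ + V))
    (hC4 : ((Z * S * Zᵀ + V) * Cm)ᵀ = (Z * S * Zᵀ + V) * Cm)
    (Y : Ω → Fin q → ℝ) (hY : ∀ ω, Y ω = Z.mulVec (X ω) + ε ω)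
    (K : Matrix (Fin p) (Fin q) ℝ) (hK : K = S * Zᵀ * Cm)
    (ZS : Matrix (Fin p) (Fin q) ℝ) (hZS : ZS = S * Zᵀ * Bm)
    (Dm : Matrix (Fin p) (Fin p) ℝ) (hDm : Dm = (ZS * Z)ᵀ * Sm * (ZS * Z))
    (e : Ω → Fin p → ℝ)
    (he : ∀ ω, e ω = X ω - ZS.mulVec (Y ω - huber b (Y ω - (Z * K).mulVec (Y ω)))) :
    (∀ ω, e ω ⬝ᵥ Dm.mulVec (e ω) ≤
        2 * (ε ω ⬝ᵥ Bm.mulVec (ε ω)) +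
        2 * (huber b (Y ω - (Z * K).mulVec (Y ω)) ⬝ᵥ
              Bm.mulVec (huber b (Y ω - (Z * K).mulVec (Y ω))))) ∧
    (∫ ω, e ω ⬝ᵥ Dm.mulVec (e ω) ∂μ) ≤
        2 * Matrix.trace (Bm * (V + b ^ 2 • (1 : Matrix (Fin q) (Fin q) ℝ))) :=
  rLSIO_bounded_risk_general μ X ε Z S hS V hεL2 hCovε b Sm hS2 Bm hB1 hB2 hB3 hB4 Y hY K ZS hZS Dm
    hDm e he
end
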